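/- arXiv:1110.6380 — 2 statements merged into one kernel-verified Lean document; each statement's English description precedes it below -/
import Mathlib

section
/- Let K be a field and let f, g, τ, x, y ∈ K with x ≠ 0 and y² = x·(x + τ(gτ + 1)(f + τ))·(x + τ²(g + 1)(f + 1)). Set X = y²/x² and Y = y·(x² − τ³(gτ + 1)(f + τ)(g + 1)(f + 1))/x². Then Y² = X·(X² − 2τ(2fgτ + (1 + τ)(gτ + f) + 2τ)·X + τ²(1 − τ)²(gτ − f)²). (This realizes the quotient, computed in Section 6, of the elliptic fibration with reducible fibers 2I₂* on the K3 surface X₍₁₈,₄,₁₎ (case 20a of Section 5) by its van Geemen–Sarti involution σ_t, the quotient fibration being equation (6.2) of the paper.) -/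
/-!
The fibration is `E_{p+q, pq}` with `p = τ(gτ + 1)(f + τ)` and `q = τ²(g + 1)(f + 1)`, and the
2-isogeny `(x, y) ↦ (y²/x², y(x² - b)/x²)` maps `E_{a,b}` to `E_{-2a, a² - 4b}`. Here
`a² - 4b = (p - q)²`, and `p - q = τ(τ - 1)(gτ - f)` gives the constant term of (6.2).
-/

namespace TwoIsogeny

variable {K : Type*} [Field K]

theorem image_mem {a b x y : K} (hx : x ≠ 0) (h : y ^ 2 = x * (x ^ 2 + a * x + b)) :
    (y * (x ^ 2 - b) / x ^ 2) ^ 2 =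
      (y ^ 2 / x ^ 2) * ((y ^ 2 / x ^ 2) ^ 2 - 2 * a * (y ^ 2 / x ^ 2) + (a ^ 2 - 4 * b)) := by
  have hcubic : (x ^ 2 + a * x + b) ^ 2 - 2 * a * x * (x ^ 2 + a * x + b) + (a ^ 2 - 4 * b) * x ^ 2
      = (x ^ 2 - b) ^ 2 := by ring
  field_simp
  rw [h, ← hcubic]
  ring

theorem image_mem_of_split {p q x y : K} (hx : x ≠ 0) (h : y ^ 2 = x * (x + p) * (x + q)) :
    (y * (x ^ 2 - p * q) / x ^ 2) ^ 2 =
      (y ^ 2 / x ^ 2) * ((y ^ 2 / x ^ 2) ^ 2 - 2 * (p + q) * (y ^ 2 / x ^ 2) + (p - q) ^ 2) := by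
  rw [image_mem hx (a := p + q) (h.trans (by ring))]
  ring

end TwoIsogeny

/-- The quotient of the elliptic fibration with reducible fibers 2I₂* on
`X₍₁₈,₄,₁₎` (case 20a of Section 5) by its van Geemen–Sarti involution: the 2-isogeny lands on
the fibration of equation (6.2). -/
theorem stmt3 {K : Type*} [Field K] (f g τ x y : K) (hx : x ≠ 0)
    (hxy : y ^ 2 = x * (x + τ * (g * τ + 1) * (f + τ)) * (x + τ ^ 2 * (g + 1) * (f + 1))) :
    (y * (x ^ 2 - τ ^ 3 * (g * τ + 1) * (f + τ) * (g + 1) * (f + 1)) / x ^ 2) ^ 2 =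
      (y ^ 2 / x ^ 2) *
        ((y ^ 2 / x ^ 2) ^ 2 -
          2 * τ * (2 * f * g * τ + (1 + τ) * (g * τ + f) + 2 * τ) * (y ^ 2 / x ^ 2) +
          τ ^ 2 * (1 - τ) ^ 2 * (g * τ - f) ^ 2) := by
  set p := τ * (g * τ + 1) * (f + τ)
  set q := τ ^ 2 * (g + 1) * (f + 1)
  have hpq : τ ^ 3 * (g * τ + 1) * (f + τ) * (g + 1) * (f + 1) = p * q := by ring
  have hsum : τ * (2 * f * g * τ + (1 + τ) * (g * τ + f) + 2 * τ) = p + q := by ring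
  have hdiff : τ ^ 2 * (1 - τ) ^ 2 * (g * τ - f) ^ 2 = (p - q) ^ 2 := by ring
  rw [hpq, mul_assoc 2, hsum, hdiff]
  exact TwoIsogeny.image_mem_of_split hx hxy
end

section
/- Let K = ℂ(f, g, τ) be the field of rational functions in three independent indeterminates f, g, τ over ℂ, and let E be the elliptic curve over K defined by equation (6.2): y² = x(x² − 2τ(2fgτ + (1 + τ)(gτ + f) + 2τ)·x + τ²(1 − τ)²(gτ − f)²). Then E is nonsingular (its discriminant is nonzero) and the group E(K) of K-rational points contains no point of additive order 4. (This is the claim of Section 6 that the quotient fibration (6.2) does not admit a 4-torsion section, so that the torsion coming from the 2-torsion section (0,0) generates a copy of ℤ/2ℤ and not of ℤ/4ℤ in its Mordell–Weil group.) -/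
/-!
Write (6.2) as `y² = x(x² + a x + b)`. A rational point of order 2 other than `(0, 0)` would be a
root of `x² + a x + b`, but `a² - 4b = 16τ³(gτ + 1)(f + τ)(f + 1)(g + 1)` is not a square. So a
point `P` of order 4 has `2P = (0, 0)`, and the duplication formula gives `x(P)² = b` and
`(y/x)(P)² = a + 2x(P)`. Since `b = c²` with `c = τ(1 - τ)(gτ - f)`, one of
`a + 2c = -4τ(gτ + 1)(f + τ)` and `a - 2c = -4τ²(f + 1)(g + 1)` would be a square in `ℂ(f, g, τ)`,
which is impossible because the prime `τ`, resp. `f + 1`, divides it to an odd power.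
-/
open MvPolynomial

/-- `K = ℂ(f, g, τ)`, the field of rational functions in three independent indeterminates over
`ℂ`, realized as the fraction field of the polynomial ring `ℂ[f, g, τ]`. -/
abbrev FunField : Type := FractionRing (MvPolynomial (Fin 3) ℂ)

/-- The indeterminate `f` (a modulus of the K3 surface `X₍₁₈,₄,₁₎`). -/
noncomputable def fParam : FunField := algebraMap (MvPolynomial (Fin 3) ℂ) FunField (X 0)

/-- The indeterminate `g` (a modulus of the K3 surface `X₍₁₈,₄,₁₎`). -/
noncomputable def gParam : FunField := algebraMap (MvPolynomial (Fin 3) ℂ) FunField (X 1)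

/-- The indeterminate `τ` (the parameter of the base `ℙ¹` of the fibration). -/
noncomputable def τParam : FunField := algebraMap (MvPolynomial (Fin 3) ℂ) FunField (X 2)

/-- The elliptic curve over `ℂ(f, g, τ)` defined by equation (6.2) of the paper:
`y² = x(x² − 2τ(2fgτ + (1 + τ)(gτ + f) + 2τ)x + τ²(1 − τ)²(gτ − f)²)`. -/
noncomputable def E62 : WeierstrassCurve.Affine FunField :=
  { a₁ := 0
    a₂ := -(2 * τParam * (2 * fParam * gParam * τParam +
      (1 + τParam) * (gParam * τParam + fParam) + 2 * τParam))
    a₃ := 0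
    a₄ := τParam ^ 2 * (1 - τParam) ^ 2 * (gParam * τParam - fParam) ^ 2
    a₆ := 0 }

theorem Prime.sq_ne_mul_mul_sq {α : Type*} [CommMonoidWithZero α] [IsCancelMulZero α]
    [WfDvdMonoid α] {π q t : α} (hπ : Prime π) (hq : ¬π ∣ q) (ht : t ≠ 0) (s : α) :
    s ^ 2 ≠ π * q * t ^ 2 := by
  intro h
  have hq0 : q ≠ 0 := by
    rintro rfl
    exact hq (dvd_zero π)
  have hs : s ≠ 0 :=
    ne_zero_pow two_ne_zero (h ▸ mul_ne_zero (mul_ne_zero hπ.ne_zero hq0) (pow_ne_zero 2 ht))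
  -- the multiplicity of `π` is even on the left and odd on the right
  have hmul := congrArg (emultiplicity π) h
  rw [emultiplicity_mul hπ, emultiplicity_mul hπ, emultiplicity_pow hπ, emultiplicity_pow hπ,
    (FiniteMultiplicity.of_prime_left hπ hπ.ne_zero).emultiplicity_self,
    emultiplicity_eq_zero.mpr hq,
    (FiniteMultiplicity.of_prime_left hπ hs).emultiplicity_eq_multiplicity,
    (FiniteMultiplicity.of_prime_left hπ ht).emultiplicity_eq_multiplicity] at hmul
  norm_cast at hmul
  omega

theorem Prime.not_isSquare_algebraMap_mul_mul_sq {R K : Type*} [CommRing R] [IsDomain R]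
    [WfDvdMonoid R] [Field K] [Algebra R K] [IsFractionRing R K] {π q t : R} (hπ : Prime π)
    (hq : ¬π ∣ q) (ht : t ≠ 0) : ¬IsSquare (algebraMap R K (π * q * t ^ 2)) := by
  rintro ⟨u, hu⟩
  obtain ⟨a, b, hb, rfl⟩ := IsFractionRing.div_surjective (A := R) u
  have hb0 : algebraMap R K b ≠ 0 := IsFractionRing.to_map_ne_zero_of_mem_nonZeroDivisors hb
  refine hπ.sq_ne_mul_mul_sq hq (mul_ne_zero ht (nonZeroDivisors.ne_zero hb)) a
    (IsFractionRing.injective R K ?_)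
  simp only [map_mul, map_pow] at hu ⊢
  field_simp at hu
  linear_combination -hu

namespace MvPolynomial

theorem prime_X_zero_add_C {R : Type*} [CommRing R] [IsDomain R] {n : ℕ} (c : R) :
    Prime (X 0 + C c : MvPolynomial (Fin (n + 1)) R) := by
  refine (MulEquiv.prime_iff (finSuccEquiv R n)).mp ?_
  simpa [finSuccEquiv_apply] using Polynomial.prime_X_sub_C (-(C c : MvPolynomial (Fin n) R))

theorem not_dvd_of_eval_eq_zero {σ R : Type*} [CommSemiring R] {p q : MvPolynomial σ R}
    (v : σ → R) (hp : eval v p = 0) (hq : eval v q ≠ 0) : ¬p ∣ q := by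
  rintro ⟨r, rfl⟩
  simp [hp] at hq

end MvPolynomial

namespace WeierstrassCurve.Affine

variable {F : Type*} [Field F] {W : WeierstrassCurve.Affine F}

theorem equation_iff_of_a₁_a₃_a₆ (h₁ : W.a₁ = 0) (h₃ : W.a₃ = 0) (h₆ : W.a₆ = 0) {x y : F} :
    W.Equation x y ↔ y ^ 2 = x * (x ^ 2 + W.a₂ * x + W.a₄) := by
  rw [equation_iff, h₁, h₃, h₆]
  constructor <;> intro h <;> linear_combination h

theorem negY_of_a₁_a₃ (h₁ : W.a₁ = 0) (h₃ : W.a₃ = 0) (x y : F) : W.negY x y = -y := by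
  simp [negY, h₁, h₃]

variable [DecidableEq F]

theorem x_eq_zero_of_add_self_eq_zero (h₁ : W.a₁ = 0) (h₃ : W.a₃ = 0) (h₆ : W.a₆ = 0)
    (h2 : (2 : F) ≠ 0) (hdisc : ¬IsSquare (W.a₂ ^ 2 - 4 * W.a₄)) {x y : F}
    (h : W.Nonsingular x y) (hP : Point.some x y h + Point.some x y h = 0) : x = 0 := by
  have hy : y = W.negY x y := by
    by_contra hy
    exact Point.some_ne_zero _ ((Point.add_self_of_Y_ne hy).symm.trans hP)
  rw [negY_of_a₁_a₃ h₁ h₃, eq_neg_iff_add_eq_zero, ← two_mul] at hy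
  have hcubic := (equation_iff_of_a₁_a₃_a₆ h₁ h₃ h₆).mp h.1
  rw [(mul_eq_zero.mp hy).resolve_left h2, eq_comm, zero_pow two_ne_zero, mul_eq_zero] at hcubic
  refine hcubic.resolve_right fun hroot => hdisc ⟨2 * x + W.a₂, ?_⟩
  linear_combination -4 * hroot

theorem sq_eq_a₄_and_isSquare_of_addX_eq_zero (h₁ : W.a₁ = 0) (h₃ : W.a₃ = 0) (h₆ : W.a₆ = 0)
    {x y : F} (h : W.Equation x y) (hy : y ≠ W.negY x y)
    (hx : W.addX x x (W.slope x x y y) = 0) : x ^ 2 = W.a₄ ∧ IsSquare (W.a₂ + 2 * x) := by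
  have hcubic := (equation_iff_of_a₁_a₃_a₆ h₁ h₃ h₆).mp h
  rw [negY_of_a₁_a₃ h₁ h₃] at hy
  have h2y : 2 * y ≠ 0 := fun h0 => hy (by linear_combination h0)
  have hslope : W.slope x x y y * (2 * y) = 3 * x ^ 2 + 2 * W.a₂ * x + W.a₄ := by
    rw [slope_of_Y_ne rfl (by rwa [negY_of_a₁_a₃ h₁ h₃]), negY_of_a₁_a₃ h₁ h₃, h₁, sub_neg_eq_add,
      ← two_mul, zero_mul, sub_zero, div_mul_cancel₀ _ h2y]
  have hslope_sq : W.slope x x y y ^ 2 = W.a₂ + 2 * x := by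
    rw [addX, h₁] at hx
    linear_combination hx
  -- `(3x² + 2a₂x + a₄)² - 4(a₂ + 2x) · x(x² + a₂x + a₄) = (x² - a₄)²`
  have hx₄ : (x ^ 2 - W.a₄) ^ 2 = 0 := by
    linear_combination -(W.slope x x y y * (2 * y) + 3 * x ^ 2 + 2 * W.a₂ * x + W.a₄) * hslope
      + 4 * y ^ 2 * hslope_sq + 4 * (W.a₂ + 2 * x) * hcubic
  have hx₄' : x ^ 2 = W.a₄ := sub_eq_zero.mp ((pow_eq_zero_iff two_ne_zero).mp hx₄)
  have hx0 : x ≠ 0 := by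
    rintro rfl
    have hy0 : y = 0 := by simpa using hcubic
    exact h2y (by rw [hy0, mul_zero])
  refine ⟨hx₄', y / x, ?_⟩
  rw [div_mul_div_comm, ← sq, ← sq, eq_div_iff (pow_ne_zero 2 hx0)]
  linear_combination -hcubic + x * hx₄'

theorem addOrderOf_ne_four (h₁ : W.a₁ = 0) (h₃ : W.a₃ = 0) (h₆ : W.a₆ = 0) (h2 : (2 : F) ≠ 0)
    (hdisc : ¬IsSquare (W.a₂ ^ 2 - 4 * W.a₄)) {c : F} (hc : c ^ 2 = W.a₄)
    (hadd : ¬IsSquare (W.a₂ + 2 * c)) (hsub : ¬IsSquare (W.a₂ - 2 * c)) (P : W.Point) :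
    addOrderOf P ≠ 4 := by
  intro h4
  have h2P : P + P ≠ 0 := by
    rw [← two_nsmul]
    exact fun h => absurd (addOrderOf_le_of_nsmul_eq_zero two_pos h) (by omega)
  have h4P : (P + P) + (P + P) = 0 := by
    rw [← addOrderOf_nsmul_eq_zero P, h4]
    abel
  rcases P with _ | @⟨x, y, h⟩
  · exact h2P (zero_add 0)
  have hy : y ≠ W.negY x y := fun hy => h2P (Point.add_self_of_Y_eq hy)
  rw [Point.add_self_of_Y_ne hy] at h4P
  obtain ⟨hxc, hsq⟩ := sq_eq_a₄_and_isSquare_of_addX_eq_zero h₁ h₃ h₆ h.1 hy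
    (x_eq_zero_of_add_self_eq_zero h₁ h₃ h₆ h2 hdisc _ h4P)
  rcases sq_eq_sq_iff_eq_or_eq_neg.mp (hxc.trans hc.symm) with rfl | rfl
  · exact hadd hsq
  · exact hsub (by rwa [mul_neg, ← sub_eq_add_neg] at hsq)

end WeierstrassCurve.Affine

theorem E62_Δ_ne_zero : E62.Δ ≠ 0 := by
  have hΔ : E62.Δ = algebraMap (MvPolynomial (Fin 3) ℂ) FunField
      (256 * X 2 ^ 7 * (1 - X 2) ^ 4 * (X 1 * X 2 - X 0) ^ 4 * (X 1 * X 2 + 1) *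
        (X 0 + X 2) * (X 0 + 1) * (X 1 + 1)) := by
    simp only [WeierstrassCurve.Δ, WeierstrassCurve.b₂, WeierstrassCurve.b₄,
      WeierstrassCurve.b₆, WeierstrassCurve.b₈, E62, fParam, gParam, τParam, map_mul,
      map_pow, map_sub, map_add, map_one, map_ofNat]
    ring
  rw [hΔ, map_ne_zero_iff _ (IsFractionRing.injective _ _)]
  intro h
  have hv := congrArg (eval fun _ => 2) h
  norm_num at hv

theorem not_isSquare_E62_a₂_sq_sub : ¬IsSquare (E62.a₂ ^ 2 - 4 * E62.a₄) := by
  have h : E62.a₂ ^ 2 - 4 * E62.a₄ = algebraMap (MvPolynomial (Fin 3) ℂ) FunField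
      (X 2 * (16 * (X 1 * X 2 + 1) * (X 0 + X 2) * (X 0 + 1) * (X 1 + 1)) * X 2 ^ 2) := by
    simp only [E62, fParam, gParam, τParam, map_mul, map_pow, map_add, map_one, map_ofNat]
    ring
  rw [h]
  exact (X_prime (i := 2)).not_isSquare_algebraMap_mul_mul_sq
    (not_dvd_of_eval_eq_zero ![1, 1, 0] (by simp) (by simp [Matrix.cons_val])) (X_ne_zero 2)

theorem E62_a₄_eq_sq : (τParam * (1 - τParam) * (gParam * τParam - fParam)) ^ 2 = E62.a₄ := by
  simp only [E62]
  ring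

theorem not_isSquare_E62_a₂_add :
    ¬IsSquare (E62.a₂ + 2 * (τParam * (1 - τParam) * (gParam * τParam - fParam))) := by
  have h : E62.a₂ + 2 * (τParam * (1 - τParam) * (gParam * τParam - fParam)) =
      algebraMap (MvPolynomial (Fin 3) ℂ) FunField
        (X 2 * (-4 * (X 1 * X 2 + 1) * (X 0 + X 2)) * 1 ^ 2) := by
    simp only [E62, fParam, gParam, τParam, map_mul, map_pow, map_add, map_one, map_ofNat,
      map_neg]
    ring
  rw [h]
  exact (X_prime (i := 2)).not_isSquare_algebraMap_mul_mul_sq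
    (not_dvd_of_eval_eq_zero ![1, 1, 0] (by simp) (by simp [Matrix.cons_val])) one_ne_zero

theorem not_isSquare_E62_a₂_sub :
    ¬IsSquare (E62.a₂ - 2 * (τParam * (1 - τParam) * (gParam * τParam - fParam))) := by
  have h : E62.a₂ - 2 * (τParam * (1 - τParam) * (gParam * τParam - fParam)) =
      algebraMap (MvPolynomial (Fin 3) ℂ) FunField
        ((X 0 + C 1) * (-4 * (X 1 + 1)) * X 2 ^ 2) := by
    simp only [E62, fParam, gParam, τParam, map_mul, map_pow, map_add, map_one, map_ofNat,
      map_neg]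
    ring
  rw [h]
  exact (prime_X_zero_add_C 1).not_isSquare_algebraMap_mul_mul_sq
    (not_dvd_of_eval_eq_zero ![-1, 0, 1] (by simp) (by norm_num)) (X_ne_zero 2)

/-- The curve (6.2) over `ℂ(f, g, τ)` is nonsingular (its discriminant is
nonzero) and its group of rational points contains no point of additive order 4; hence the
quotient fibration (6.2) of Section 6 does not admit a 4-torsion section. -/
theorem stmt7 : E62.Δ ≠ 0 ∧ ∀ P : E62.Point, addOrderOf P ≠ 4 :=
  ⟨E62_Δ_ne_zero, WeierstrassCurve.Affine.addOrderOf_ne_four rfl rfl rfl two_ne_zero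
    not_isSquare_E62_a₂_sq_sub E62_a₄_eq_sq not_isSquare_E62_a₂_add not_isSquare_E62_a₂_sub⟩
end
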